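/- For the Lemniscate of Bernoulli f = (x²+y²)² - 2(x²-y²)z², the graded pieces of the Milnor algebra M(f) = ℂ[x,y,z]/(f_x, f_y, f_z) satisfy dim M(f)_k = 3 for all k ≥ 5, with dimensions 1, 3, 6, 7, 6 in degrees 0 through 4. -/

import Mathlib

/-
The partial derivatives of `f` are `4 g₀, 4 g₁, 4 g₂` with `g₀ = x (x² + y² - z²)`,
`g₁ = y (x² + y² + z²)`, `g₂ = z (y² - x²)`, so `J = (g₀, g₁, g₂)`. In each degree `k` we exhibit
monomials `m₁, …, m_t` and linear functionals `φ₁, …, φ_t` on `S_k` with `φᵢ(mⱼ) = δᵢⱼ` and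
`φᵢ(J_k) = 0`, such that the `mⱼ` span `S_k` modulo `J`; then `dim M(f)_k = t`. Spanning goes by
induction on `k`: since `S_{k+1} = x S_k + y S_k + z S_k`, it suffices to reduce each `xᵢ mⱼ`
modulo `J` to the next family, which is an explicit ideal-membership certificate. For `k ≥ 5` the
family is `z^k, y^k, x y^(k-1)` and the functionals are evaluations at the three nodes
`(0 : 0 : 1)`, `(± i : 1 : 0)` of the curve, where all partials vanish, so they kill `J` outright.
-/

open MvPolynomial

/-- The degree-`k` piece of the Milnor algebra `S/J_f`: the space of
homogeneous polynomials of degree `k` modulo those lying in the Jacobian ideal. -/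
noncomputable abbrev milnorPiece (f : MvPolynomial (Fin 3) ℂ) (k : ℕ) :=
  homogeneousSubmodule (Fin 3) ℂ k ⧸
    Submodule.comap (homogeneousSubmodule (Fin 3) ℂ k).subtype
      ((Ideal.span {pderiv 0 f, pderiv 1 f, pderiv 2 f}).restrictScalars ℂ)

open Module Submodule

theorem finrank_quotient_eq_card_of_dual {K V ι : Type*} [Field K] [AddCommGroup V] [Module K V]
    [Fintype ι] [DecidableEq ι] (N : Submodule K V) (φ : V →ₗ[K] ι → K) (m : ι → V)
    (hN : N ≤ LinearMap.ker φ) (hdual : ∀ i, φ (m i) = Pi.single i 1)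
    (hspan : N ⊔ span K (Set.range m) = ⊤) :
    finrank K (V ⧸ N) = Fintype.card ι := by
  have hli : LinearIndependent K (N.mkQ ∘ m) := by
    have hcomp : N.liftQ φ hN ∘ N.mkQ ∘ m = Pi.basisFun K ι := by
      ext i : 1
      simp [hdual]
    exact .of_comp (N.liftQ φ hN) (hcomp ▸ (Pi.basisFun K ι).linearIndependent)
  have hsp : ⊤ ≤ span K (Set.range (N.mkQ ∘ m)) := by
    rw [Set.range_comp, ← map_span, (map_mkQ_eq_top N _).2 hspan]
  rw [finrank_eq_card_basis (Basis.mk hli hsp)]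

theorem finrank_quotient_comap_subtype_eq_card_of_dual {K V ι : Type*} [Field K]
    [AddCommGroup V] [Module K V] [Fintype ι] [DecidableEq ι] (S N : Submodule K V)
    (φ : V →ₗ[K] ι → K) (m : ι → V) (hm : ∀ i, m i ∈ S) (hN : ∀ p ∈ N, p ∈ S → φ p = 0)
    (hdual : ∀ i, φ (m i) = Pi.single i 1) (hspan : S ≤ N ⊔ span K (Set.range m)) :
    finrank K (S ⧸ N.comap S.subtype) = Fintype.card ι := by
  refine finrank_quotient_eq_card_of_dual _ (φ ∘ₗ S.subtype) (fun i ↦ ⟨m i, hm i⟩)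
    (fun p hp ↦ hN p hp p.2) hdual (eq_top_iff.mpr fun p _ ↦ ?_)
  obtain ⟨y, hy, z, hz, hyz⟩ := mem_sup.mp (hspan p.2)
  obtain ⟨c, rfl⟩ := (mem_span_range_iff_exists_fun K).mp hz
  have hsum : ∑ i, c i • (⟨m i, hm i⟩ : S) ∈ span K (Set.range fun i ↦ (⟨m i, hm i⟩ : S)) :=
    sum_mem fun i _ ↦ smul_mem _ _ (subset_span ⟨i, rfl⟩)
  refine mem_sup.mpr ⟨_, ?_, _, hsum, sub_add_cancel p _⟩
  simpa [← hyz] using hy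

namespace Ideal

variable {K A ι : Type*} [CommSemiring K] [CommSemiring A] [Algebra K A]

theorem mem_restrictScalars_sup_span_of_eq {κ : Type*} [Fintype κ] [Fintype ι] {g : κ → A}
    {m : ι → A} {p : A} (a : κ → A) (c : ι → K) (h : p = ∑ j, a j * g j + ∑ i, c i • m i) :
    p ∈ (span (Set.range g)).restrictScalars K ⊔ Submodule.span K (Set.range m) :=
  h ▸ add_mem_sup (mem_span_range_iff_exists_fun.mpr ⟨a, rfl⟩)
    ((Submodule.mem_span_range_iff_exists_fun K).mpr ⟨c, rfl⟩)

theorem mul_mem_restrictScalars_sup_span {ι' : Type*} {I : Ideal A} {m : ι → A} {m' : ι' → A}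
    {x : A} (h : ∀ i, x * m i ∈ I.restrictScalars K ⊔ Submodule.span K (Set.range m')) {p : A}
    (hp : p ∈ I.restrictScalars K ⊔ Submodule.span K (Set.range m)) :
    x * p ∈ I.restrictScalars K ⊔ Submodule.span K (Set.range m') := by
  have hle : I.restrictScalars K ⊔ Submodule.span K (Set.range m) ≤
      (I.restrictScalars K ⊔ Submodule.span K (Set.range m')).comap (LinearMap.mulLeft K x) := by
    refine sup_le (fun q hq ↦ ?_) (Submodule.span_le.mpr (Set.range_subset_iff.mpr h))
    exact Submodule.mem_sup_left (I.mul_mem_left x hq)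
  exact hle hp

end Ideal

namespace MvPolynomial

variable {σ R ι : Type*} [CommSemiring R]

attribute [local instance] gradedAlgebra in
theorem homogeneousComponent_mul_of_isHomogeneous (a : MvPolynomial σ R)
    {g : MvPolynomial σ R} {d : ℕ} (hg : g.IsHomogeneous d) (n : ℕ) :
    homogeneousComponent n (a * g) = if d ≤ n then homogeneousComponent (n - d) a * g else 0 := by
  simpa [← decomposition.decompose'_apply] using
    DirectSum.coe_decompose_mul_of_right_mem (homogeneousSubmodule σ R) n (a := a) hg

theorem eq_zero_of_mem_span_of_isHomogeneous_of_lt [Fintype ι] {g : ι → MvPolynomial σ R}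
    {d k : ℕ} (hg : ∀ i, (g i).IsHomogeneous d) {p : MvPolynomial σ R}
    (hp : p ∈ Ideal.span (Set.range g)) (hpk : p.IsHomogeneous k) (hk : k < d) : p = 0 := by
  obtain ⟨c, rfl⟩ := Ideal.mem_span_range_iff_exists_fun.mp hp
  rw [← homogeneousComponent_eq_self hpk, map_sum]
  exact Finset.sum_eq_zero fun i _ ↦ by
    rw [homogeneousComponent_mul_of_isHomogeneous _ (hg i), if_neg (not_le.mpr hk)]

theorem map_eq_zero_of_mem_span_of_isHomogeneous {M : Type*} [AddCommMonoid M] [Module R M]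
    [Fintype ι] {g : ι → MvPolynomial σ R} {d n : ℕ} (hg : ∀ i, (g i).IsHomogeneous d)
    (φ : MvPolynomial σ R →ₗ[R] M)
    (hφ : ∀ i, homogeneousSubmodule σ R n ≤ LinearMap.ker (φ ∘ₗ LinearMap.mulRight R (g i)))
    {p : MvPolynomial σ R} (hp : p ∈ Ideal.span (Set.range g)) (hpk : p.IsHomogeneous (n + d)) :
    φ p = 0 := by
  obtain ⟨c, rfl⟩ := Ideal.mem_span_range_iff_exists_fun.mp hp
  rw [← homogeneousComponent_eq_self hpk, map_sum, map_sum]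
  refine Finset.sum_eq_zero fun i _ ↦ ?_
  rw [homogeneousComponent_mul_of_isHomogeneous _ (hg i), if_pos (Nat.le_add_left d n),
    Nat.add_sub_cancel]
  exact hφ i (homogeneousComponent_mem n (c i))

theorem aeval_eq_zero_of_mem_span {x : σ → R} {g : ι → MvPolynomial σ R}
    (hg : ∀ i, aeval x (g i) = 0) {p : MvPolynomial σ R} (hp : p ∈ Ideal.span (Set.range g)) :
    aeval x p = 0 :=
  (Ideal.span_le (I := RingHom.ker (aeval x))).mpr (Set.range_subset_iff.mpr hg) hp

theorem homogeneousSubmodule_succ_le {W : Submodule R (MvPolynomial σ R)} {n : ℕ}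
    (h : ∀ i, ∀ p ∈ homogeneousSubmodule σ R n, X i * p ∈ W) :
    homogeneousSubmodule σ R (n + 1) ≤ W := by
  rw [← homogeneousSubmodule_one_pow, pow_succ', homogeneousSubmodule_one_pow,
    homogeneousSubmodule_one_eq_span_X, mul_le]
  intro a ha p hp
  induction ha using span_induction with
  | mem x hx => obtain ⟨i, rfl⟩ := hx; exact h i p hp
  | zero => simp
  | add x y _ _ hx hy => rw [add_mul]; exact W.add_mem hx hy
  | smul r x _ hx => rw [smul_mul_assoc]; exact W.smul_mem r hx

theorem homogeneousSubmodule_succ_le_sup_span {I : Ideal (MvPolynomial σ R)} {ι' : Type*}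
    {m : ι → MvPolynomial σ R} {m' : ι' → MvPolynomial σ R} {n : ℕ}
    (hn : homogeneousSubmodule σ R n ≤ I.restrictScalars R ⊔ span R (Set.range m))
    (h : ∀ i j, X i * m j ∈ I.restrictScalars R ⊔ span R (Set.range m')) :
    homogeneousSubmodule σ R (n + 1) ≤ I.restrictScalars R ⊔ span R (Set.range m') :=
  homogeneousSubmodule_succ_le fun i _ hp ↦ Ideal.mul_mem_restrictScalars_sup_span (h i) (hn hp)

end MvPolynomial

noncomputable section

namespace Lemniscate

local notation "P" => MvPolynomial (Fin 3) ℂ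

def mono (a b c : ℕ) : P := X 0 ^ a * X 1 ^ b * X 2 ^ c

theorem isHomogeneous_mono {a b c k : ℕ} (h : a + b + c = k) : (mono a b c).IsHomogeneous k :=
  h ▸ ((isHomogeneous_X_pow 0 a).mul (isHomogeneous_X_pow 1 b)).mul (isHomogeneous_X_pow 2 c)

@[simp] theorem X_zero_mul_mono (a b c : ℕ) : X 0 * mono a b c = mono (a + 1) b c := by
  simp only [mono]; ring
@[simp] theorem X_one_mul_mono (a b c : ℕ) : X 1 * mono a b c = mono a (b + 1) c := by
  simp only [mono]; ring
@[simp] theorem X_two_mul_mono (a b c : ℕ) : X 2 * mono a b c = mono a b (c + 1) := by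
  simp only [mono]; ring

def lemniscate : P := (X 0 ^ 2 + X 1 ^ 2) ^ 2 - 2 * (X 0 ^ 2 - X 1 ^ 2) * X 2 ^ 2

def quarterGrad : Fin 3 → P :=
  ![mono 3 0 0 + mono 1 2 0 - mono 1 0 2, mono 2 1 0 + mono 0 3 0 + mono 0 1 2,
    mono 0 2 1 - mono 2 0 1]

theorem pderiv_lemniscate (i : Fin 3) : pderiv i lemniscate = 4 * quarterGrad i := by
  have h2 : ∀ j : Fin 3, pderiv j (2 : P) = 0 := fun j ↦ by simpa using (pderiv j).map_natCast 2
  fin_cases i <;> simp [lemniscate, quarterGrad, mono, pderiv_X, h2] <;> ring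

theorem isHomogeneous_quarterGrad (i : Fin 3) : (quarterGrad i).IsHomogeneous 3 := by
  fin_cases i <;> simp only [quarterGrad] <;>
    apply_rules [IsHomogeneous.add, IsHomogeneous.sub, isHomogeneous_mono]

theorem quarterGrad_eq (i : Fin 3) : quarterGrad i = C 4⁻¹ * pderiv i lemniscate := by
  rw [pderiv_lemniscate, ← mul_assoc, ← map_ofNat C 4, ← C_mul,
    inv_mul_cancel₀ (by norm_num : (4 : ℂ) ≠ 0), C_1, one_mul]

theorem jacobian_lemniscate :
    Ideal.span {pderiv 0 lemniscate, pderiv 1 lemniscate, pderiv 2 lemniscate} =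
      Ideal.span (Set.range quarterGrad) := by
  apply le_antisymm <;> rw [Ideal.span_le]
  · rintro _ (rfl | rfl | rfl) <;> rw [pderiv_lemniscate] <;>
      exact Ideal.mul_mem_left _ _ (Ideal.subset_span ⟨_, rfl⟩)
  · rintro _ ⟨i, rfl⟩
    rw [quarterGrad_eq]
    refine Ideal.mul_mem_left _ _ (Ideal.subset_span ?_)
    fin_cases i <;> simp

def modJacobian {ι : Type*} (m : ι → P) : Submodule ℂ P :=
  (Ideal.span (Set.range quarterGrad)).restrictScalars ℂ ⊔ span ℂ (Set.range m)

theorem mem_modJacobian_of_mem_range {ι : Type*} {m : ι → P} {p : P} (h : p ∈ Set.range m) :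
    p ∈ modJacobian m :=
  mem_sup_right (subset_span h)

theorem mem_modJacobian_of_eq {ι : Type*} [Fintype ι] {m : ι → P} {p : P} (s : ℕ)
    (a : Fin 3 → P) (c : ι → ℤ) (h : s * p = ∑ j, a j * quarterGrad j + ∑ i, (c i : P) * m i)
    (hs : s ≠ 0 := by norm_num) : p ∈ modJacobian m := by
  refine (smul_mem_iff _ (Nat.cast_ne_zero.mpr hs : (s : ℂ) ≠ 0)).mp ?_
  refine Ideal.mem_restrictScalars_sup_span_of_eq a (fun i ↦ (c i : ℂ)) ?_
  rw [Nat.cast_smul_eq_nsmul, nsmul_eq_mul, h]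
  simp only [Int.cast_smul_eq_zsmul, zsmul_eq_mul]

theorem finrank_milnorPiece_lemniscate {ι : Type*} [Fintype ι] [DecidableEq ι] {k : ℕ}
    (φ : P →ₗ[ℂ] ι → ℂ) (m : ι → P) (hm : ∀ i, (m i).IsHomogeneous k)
    (hφ : ∀ p ∈ Ideal.span (Set.range quarterGrad), p.IsHomogeneous k → φ p = 0)
    (hdual : ∀ i, φ (m i) = Pi.single i 1)
    (hspan : homogeneousSubmodule (Fin 3) ℂ k ≤ modJacobian m) :
    finrank ℂ (milnorPiece lemniscate k) = Fintype.card ι := by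
  unfold milnorPiece
  rw [jacobian_lemniscate]
  exact finrank_quotient_comap_subtype_eq_card_of_dual _ _ φ m hm hφ hdual hspan

def basis0 : Fin 1 → P := ![mono 0 0 0]

def basis1 : Fin 3 → P := ![mono 1 0 0, mono 0 1 0, mono 0 0 1]

def basis2 : Fin 6 → P :=
  ![mono 0 0 2, mono 0 1 1, mono 0 2 0, mono 1 0 1, mono 1 1 0, mono 2 0 0]

def basis3 : Fin 7 → P :=
  ![mono 1 1 1, mono 0 0 3, mono 3 0 0, mono 1 2 0, mono 2 1 0, mono 0 3 0, mono 2 0 1]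

def basis4 : Fin 6 → P :=
  ![mono 3 1 0, mono 3 0 1, mono 2 1 1, mono 0 4 0, mono 0 2 2, mono 0 0 4]

def nodeBasis (n : ℕ) : Fin 3 → P :=
  ![mono 0 0 (n + 5), mono 0 (n + 5) 0, mono 1 (n + 4) 0]

theorem homogeneousSubmodule_zero_le : homogeneousSubmodule (Fin 3) ℂ 0 ≤ modJacobian basis0 := by
  rw [homogeneousSubmodule_zero, one_eq_span, span_le, Set.singleton_subset_iff]
  exact mem_modJacobian_of_mem_range ⟨0, by simp [basis0, mono]⟩

theorem X_mul_basis0 : ∀ i j, X i * basis0 j ∈ modJacobian basis1 := by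
  intro i j
  fin_cases i <;> fin_cases j <;> simp [basis0] <;>
    exact mem_modJacobian_of_mem_range (by simp [basis1])

theorem X_mul_basis1 : ∀ i j, X i * basis1 j ∈ modJacobian basis2 := by
  intro i j
  fin_cases i <;> fin_cases j <;> simp [basis1] <;>
    exact mem_modJacobian_of_mem_range (by simp [basis2])

theorem X_mul_basis2 : ∀ i j, X i * basis2 j ∈ modJacobian basis3 := by
  have h012 : mono 0 1 2 ∈ modJacobian basis3 :=
    mem_modJacobian_of_eq 1 ![0, 1, 0] ![0, 0, 0, 0, -1, -1, 0] ?_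
  have h021 : mono 0 2 1 ∈ modJacobian basis3 :=
    mem_modJacobian_of_eq 1 ![0, 0, 1] ![0, 0, 0, 0, 0, 0, 1] ?_
  have h102 : mono 1 0 2 ∈ modJacobian basis3 :=
    mem_modJacobian_of_eq 1 ![-1, 0, 0] ![0, 0, 1, 1, 0, 0, 0] ?_
  · intro i j
    fin_cases i <;> fin_cases j <;> simp [basis2] <;>
      first | with_reducible assumption | exact mem_modJacobian_of_mem_range (by simp [basis3])
  all_goals simp only [mono, quarterGrad, basis3, Fin.sum_univ_succ, Fin.sum_univ_zero,
    Matrix.cons_val_zero, Matrix.cons_val_succ]; ring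

theorem X_mul_basis3 : ∀ i j, X i * basis3 j ∈ modJacobian basis4 := by
  have h013 : mono 0 1 3 ∈ modJacobian basis4 :=
    mem_modJacobian_of_eq 1 ![0, X 2, -X 1] ![0, 0, -2, 0, 0, 0] ?_
  have h031 : mono 0 3 1 ∈ modJacobian basis4 :=
    mem_modJacobian_of_eq 1 ![0, 0, X 1] ![0, 0, 1, 0, 0, 0] ?_
  have h103 : mono 1 0 3 ∈ modJacobian basis4 :=
    mem_modJacobian_of_eq 1 ![-X 2, 0, X 0] ![0, 2, 0, 0, 0, 0] ?_
  have h112 : mono 1 1 2 ∈ modJacobian basis4 :=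
    mem_modJacobian_of_eq 2 ![-X 1, X 0, 0] ![0, 0, 0, 0, 0, 0] ?_
  have h121 : mono 1 2 1 ∈ modJacobian basis4 :=
    mem_modJacobian_of_eq 1 ![0, 0, X 0] ![0, 1, 0, 0, 0, 0] ?_
  have h130 : mono 1 3 0 ∈ modJacobian basis4 :=
    mem_modJacobian_of_eq 2 ![X 1, X 0, 0] ![-2, 0, 0, 0, 0, 0] ?_
  have h202 : mono 2 0 2 ∈ modJacobian basis4 :=
    mem_modJacobian_of_eq 1 ![0, 0, -X 2] ![0, 0, 0, 0, 1, 0] ?_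
  have h220 : mono 2 2 0 ∈ modJacobian basis4 :=
    mem_modJacobian_of_eq 1 ![0, X 1, 0] ![0, 0, 0, -1, -1, 0] ?_
  have h400 : mono 4 0 0 ∈ modJacobian basis4 :=
    mem_modJacobian_of_eq 1 ![X 0, -X 1, -X 2] ![0, 0, 0, 1, 2, 0] ?_
  · intro i j
    fin_cases i <;> fin_cases j <;> simp [basis3] <;>
      first | with_reducible assumption | exact mem_modJacobian_of_mem_range (by simp [basis4])
  all_goals simp only [mono, quarterGrad, basis4, Fin.sum_univ_succ, Fin.sum_univ_zero,
    Matrix.cons_val_zero, Matrix.cons_val_succ]; ring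

theorem X_mul_basis4 : ∀ i j, X i * basis4 j ∈ modJacobian (nodeBasis 0) := by
  have h014 : mono 0 1 4 ∈ modJacobian (nodeBasis 0) :=
    mem_modJacobian_of_eq 1 ![X 0 * X 1, -X 0 ^ 2 + X 2 ^ 2, -X 1 * X 2] ![0, 0, 0] ?_
  have h023 : mono 0 2 3 ∈ modJacobian (nodeBasis 0) :=
    mem_modJacobian_of_eq 2 ![-X 0 * X 2, X 1 * X 2, -X 0 ^ 2 - X 1 ^ 2 + X 2 ^ 2] ![0, 0, 0] ?_
  have h032 : mono 0 3 2 ∈ modJacobian (nodeBasis 0) :=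
    mem_modJacobian_of_eq 2 ![-X 0 * X 1, X 0 ^ 2, 2 * X 1 * X 2] ![0, 0, 0] ?_
  have h041 : mono 0 4 1 ∈ modJacobian (nodeBasis 0) :=
    mem_modJacobian_of_eq 4 ![X 0 * X 2, X 1 * X 2, X 0 ^ 2 + 3 * X 1 ^ 2 - X 2 ^ 2] ![0, 0, 0] ?_
  have h104 : mono 1 0 4 ∈ modJacobian (nodeBasis 0) :=
    mem_modJacobian_of_eq 1 ![-X 1 ^ 2 - X 2 ^ 2, X 0 * X 1, -X 0 * X 2] ![0, 0, 0] ?_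
  have h122 : mono 1 2 2 ∈ modJacobian (nodeBasis 0) :=
    mem_modJacobian_of_eq 2 ![-X 1 ^ 2, X 0 * X 1, 0] ![0, 0, 0] ?_
  have h212 : mono 2 1 2 ∈ modJacobian (nodeBasis 0) :=
    mem_modJacobian_of_eq 2 ![-X 0 * X 1, X 0 ^ 2, 0] ![0, 0, 0] ?_
  have h221 : mono 2 2 1 ∈ modJacobian (nodeBasis 0) :=
    mem_modJacobian_of_eq 4 ![X 0 * X 2, X 1 * X 2, X 0 ^ 2 - X 1 ^ 2 - X 2 ^ 2] ![0, 0, 0] ?_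
  have h302 : mono 3 0 2 ∈ modJacobian (nodeBasis 0) :=
    mem_modJacobian_of_eq 2 ![-X 1 ^ 2, X 0 * X 1, -2 * X 0 * X 2] ![0, 0, 0] ?_
  have h311 : mono 3 1 1 ∈ modJacobian (nodeBasis 0) :=
    mem_modJacobian_of_eq 4 ![X 1 * X 2, X 0 * X 2, -2 * X 0 * X 1] ![0, 0, 0] ?_
  have h320 : mono 3 2 0 ∈ modJacobian (nodeBasis 0) :=
    mem_modJacobian_of_eq 2 ![X 1 ^ 2, X 0 * X 1, 0] ![0, 0, -2] ?_
  have h401 : mono 4 0 1 ∈ modJacobian (nodeBasis 0) :=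
    mem_modJacobian_of_eq 4 ![X 0 * X 2, X 1 * X 2, -3 * X 0 ^ 2 - X 1 ^ 2 - X 2 ^ 2] ![0, 0, 0] ?_
  have h410 : mono 4 1 0 ∈ modJacobian (nodeBasis 0) :=
    mem_modJacobian_of_eq 1 ![0, X 0 ^ 2 - X 1 ^ 2, X 1 * X 2] ![0, 1, 0] ?_
  · intro i j
    fin_cases i <;> fin_cases j <;> simp [basis4] <;>
      first | with_reducible assumption | exact mem_modJacobian_of_mem_range (by simp [nodeBasis])
  all_goals simp only [mono, quarterGrad, nodeBasis, Fin.sum_univ_succ, Fin.sum_univ_zero,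
    Matrix.cons_val_zero, Matrix.cons_val_succ]; ring

theorem X_mul_nodeBasis (n : ℕ) : ∀ i j, X i * nodeBasis n j ∈ modJacobian (nodeBasis (n + 1)) := by
  have hx : mono 1 0 (n + 5) ∈ modJacobian (nodeBasis (n + 1)) :=
    mem_modJacobian_of_eq 1 ![-X 2 ^ (n + 3) - X 1 ^ 2 * X 2 ^ (n + 1), X 0 * X 1 * X 2 ^ (n + 1),
      -X 0 * X 2 ^ (n + 2)] ![0, 0, 0] ?_
  have hy : mono 0 1 (n + 5) ∈ modJacobian (nodeBasis (n + 1)) :=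
    mem_modJacobian_of_eq 1 ![X 0 * X 1 * X 2 ^ (n + 1), X 2 ^ (n + 3) - X 0 ^ 2 * X 2 ^ (n + 1),
      -X 1 * X 2 ^ (n + 2)] ![0, 0, 0] ?_
  have hxx : mono 2 (n + 4) 0 ∈ modJacobian (nodeBasis (n + 1)) :=
    mem_modJacobian_of_eq 2 ![X 0 * X 1 ^ (n + 2), 2 * X 1 ^ (n + 3) - X 0 ^ 2 * X 1 ^ (n + 1),
      -2 * X 1 ^ (n + 2) * X 2] ![0, -2, 0] ?_
  have hz : mono 0 (n + 5) 1 ∈ modJacobian (nodeBasis (n + 1)) :=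
    mem_modJacobian_of_eq 4 ![X 0 * X 1 ^ (n + 1) * X 2, X 1 ^ (n + 2) * X 2,
      X 0 ^ 2 * X 1 ^ (n + 1) + 3 * X 1 ^ (n + 3) - X 1 ^ (n + 1) * X 2 ^ 2] ![0, 0, 0] ?_
  have hxz : mono 1 (n + 4) 1 ∈ modJacobian (nodeBasis (n + 1)) :=
    mem_modJacobian_of_eq 4
      ![X 1 ^ (n + 2) * X 2, X 0 * X 1 ^ (n + 1) * X 2, 2 * X 0 * X 1 ^ (n + 2)] ![0, 0, 0] ?_
  · intro i j
    show X i * ![mono 0 0 (n + 5), mono 0 (n + 5) 0, mono 1 (n + 4) 0] j ∈ _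
    fin_cases i <;> fin_cases j <;> simp <;>
      first | with_reducible assumption | exact mem_modJacobian_of_mem_range (by simp [nodeBasis])
  all_goals simp only [mono, quarterGrad, nodeBasis, Fin.sum_univ_succ, Fin.sum_univ_zero,
    Matrix.cons_val_zero, Matrix.cons_val_succ]; ring

theorem homogeneousSubmodule_one_le : homogeneousSubmodule (Fin 3) ℂ 1 ≤ modJacobian basis1 :=
  homogeneousSubmodule_succ_le_sup_span homogeneousSubmodule_zero_le X_mul_basis0

theorem homogeneousSubmodule_two_le : homogeneousSubmodule (Fin 3) ℂ 2 ≤ modJacobian basis2 :=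
  homogeneousSubmodule_succ_le_sup_span homogeneousSubmodule_one_le X_mul_basis1

theorem homogeneousSubmodule_three_le : homogeneousSubmodule (Fin 3) ℂ 3 ≤ modJacobian basis3 :=
  homogeneousSubmodule_succ_le_sup_span homogeneousSubmodule_two_le X_mul_basis2

theorem homogeneousSubmodule_four_le : homogeneousSubmodule (Fin 3) ℂ 4 ≤ modJacobian basis4 :=
  homogeneousSubmodule_succ_le_sup_span homogeneousSubmodule_three_le X_mul_basis3

theorem homogeneousSubmodule_add_five_le (n : ℕ) :
    homogeneousSubmodule (Fin 3) ℂ (n + 5) ≤ modJacobian (nodeBasis n) := by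
  induction n with
  | zero => exact homogeneousSubmodule_succ_le_sup_span homogeneousSubmodule_four_le X_mul_basis4
  | succ n ih => exact homogeneousSubmodule_succ_le_sup_span ih (X_mul_nodeBasis n)

def evalComb {t N : ℕ} (C : Matrix (Fin t) (Fin N) ℂ) (pts : Fin N → Fin 3 → ℂ) :
    P →ₗ[ℂ] Fin t → ℂ :=
  C.mulVecLin ∘ₗ LinearMap.pi fun j ↦ (aeval (pts j)).toLinearMap

theorem evalComb_apply {t N : ℕ} (C : Matrix (Fin t) (Fin N) ℂ) (pts : Fin N → Fin 3 → ℂ)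
    (p : P) (i : Fin t) : evalComb C pts p i = ∑ j, C i j * aeval (pts j) p := by
  simp [evalComb, Matrix.mulVec, dotProduct]

/- Row `i` of `weightsₖ` combines the values at `pointsₖ` into the coefficient of `basisₖ i` in
the normal form modulo `J` (for `k ≤ 2`, simply the coefficient of that monomial). -/
def points2 : Fin 6 → Fin 3 → ℂ :=
  ![![1, 0, 0], ![0, 1, 0], ![0, 0, 1], ![1, 1, 0], ![1, 0, 1], ![0, 1, 1]]

def weights2 : Matrix (Fin 6) (Fin 6) ℂ :=
  !![0, 0, 1, 0, 0, 0;
    0, -1, -1, 0, 0, 1;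
    0, 1, 0, 0, 0, 0;
    -1, 0, -1, 0, 1, 0;
    -1, -1, 0, 1, 0, 0;
    1, 0, 0, 0, 0, 0]

def points3 : Fin 10 → Fin 3 → ℂ :=
  ![![1, 0, 0], ![0, 1, 0], ![0, 0, 1], ![1, 1, 0], ![1, 0, 1], ![0, 1, 1], ![1, 1, 1],
    ![2, 1, 0], ![1, 0, 2], ![0, 1, 2]]

def weights3 : Matrix (Fin 7) (Fin 10) ℂ :=
  !![1, 1, 1, -1, -1, -1, 1, 0, 0, 0;
    0, 0, 1, 0, 0, 0, 0, 0, 0, 0;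
    3/2, 0, -3, 0, -1, 0, 0, 0, 1/2, 0;
    5/2, -3/2, -3, 2, -1, 0, 0, -1/2, 1/2, 0;
    -3, 0, 3, -1, 0, 1, 0, 1/2, 0, -1/2;
    0, 1/2, 3, 0, 0, 1, 0, 0, 0, -1/2;
    -3/2, -3/2, 4, 0, 2, 2, 0, 0, -1/2, -1/2]

def points4 : Fin 15 → Fin 3 → ℂ :=
  ![![1, 0, 0], ![0, 1, 0], ![0, 0, 1], ![1, 1, 0], ![1, 0, 1], ![0, 1, 1], ![1, 1, 1],
    ![2, 1, 0], ![1, 0, 2], ![0, 1, 2], ![1, 1, -1], ![1, -1, 1], ![-1, 1, 1], ![1, 2, 0],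
    ![2, 0, 1]]

def weights4 : Matrix (Fin 6) (Fin 15) ℂ :=
  !![-5/2, 5/2, 0, 0, 0, 0, 0, 1/6, 0, 0, 0, 0, 0, -1/6, 0;
    -1, 0, -7/2, 0, -2, 0, 1/4, 0, 1/3, 0, -1/4, 1/4, -1/4, 0, 1/6;
    -8, -5, 5/2, -5, -5, 1, 1/2, 1/2, 1/2, -1/2, 0, 0, 1/2, 1/2, 1/2;
    -5/2, -5/2, 0, -5, 0, 0, 0, 1/2, 0, 0, 0, 0, 0, 1/2, 0;
    -6, -8, -1, -10, 0, 0, 1/4, 1, 0, 0, 1/4, 1/4, 1/4, 1, 0;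
    0, 0, 1, 0, 0, 0, 0, 0, 0, 0, 0, 0, 0, 0, 0]

def nodes : Fin 3 → Fin 3 → ℂ := ![![0, 0, 1], ![Complex.I, 1, 0], ![-Complex.I, 1, 0]]

def nodeWeights : Matrix (Fin 3) (Fin 3) ℂ :=
  !![1, 0, 0; 0, 1/2, 1/2; 0, -Complex.I/2, Complex.I/2]

theorem evalComb_basis0 (i : Fin 1) :
    evalComb (1 : Matrix (Fin 1) (Fin 1) ℂ) ![0] (basis0 i) = Pi.single i 1 := by
  ext r
  fin_cases i; fin_cases r
  simp [evalComb_apply, basis0, mono]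

theorem evalComb_basis1 (i : Fin 3) :
    evalComb (1 : Matrix (Fin 3) (Fin 3) ℂ) (fun j ↦ Pi.single j 1) (basis1 i) = Pi.single i 1 := by
  ext r
  fin_cases i <;> fin_cases r <;>
    simp [evalComb_apply, basis1, mono, Matrix.one_apply, Pi.single_apply]

theorem evalComb_basis2 (i : Fin 6) : evalComb weights2 points2 (basis2 i) = Pi.single i 1 := by
  ext r
  fin_cases i <;> fin_cases r <;>
    norm_num [evalComb_apply, Fin.sum_univ_succ, weights2, points2, basis2, mono,
      Matrix.cons_val_two, Matrix.tail_cons, Matrix.head_cons]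

theorem evalComb_basis3 (i : Fin 7) : evalComb weights3 points3 (basis3 i) = Pi.single i 1 := by
  ext r
  fin_cases i <;> fin_cases r <;>
    norm_num [evalComb_apply, Fin.sum_univ_succ, weights3, points3, basis3, mono,
      Matrix.cons_val_two, Matrix.tail_cons, Matrix.head_cons]

theorem evalComb_basis4 (i : Fin 6) : evalComb weights4 points4 (basis4 i) = Pi.single i 1 := by
  ext r
  fin_cases i <;> fin_cases r <;>
    norm_num [evalComb_apply, Fin.sum_univ_succ, weights4, points4, basis4, mono,
      Matrix.cons_val_two, Matrix.tail_cons, Matrix.head_cons]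

theorem evalComb_nodeBasis (n : ℕ) (i : Fin 3) :
    evalComb nodeWeights nodes (nodeBasis n i) = Pi.single i 1 := by
  ext r
  fin_cases i <;> fin_cases r <;>
    norm_num [evalComb_apply, Fin.sum_univ_succ, nodeWeights, nodes, nodeBasis, mono,
      Matrix.cons_val_two, Matrix.tail_cons, Matrix.head_cons, Complex.ext_iff]

theorem map_eq_zero_of_lt_three {M : Type*} [AddCommMonoid M] [Module ℂ M] (φ : P →ₗ[ℂ] M)
    {k : ℕ} (hk : k < 3) :
    ∀ p ∈ Ideal.span (Set.range quarterGrad), p.IsHomogeneous k → φ p = 0 := fun _ hp hpk ↦ by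
  rw [eq_zero_of_mem_span_of_isHomogeneous_of_lt isHomogeneous_quarterGrad hp hpk hk, map_zero]

theorem evalComb_weights3_eq_zero :
    ∀ p ∈ Ideal.span (Set.range quarterGrad), p.IsHomogeneous 3 →
      evalComb weights3 points3 p = 0 := by
  refine fun p hp hpk ↦ map_eq_zero_of_mem_span_of_isHomogeneous (n := 0)
    isHomogeneous_quarterGrad _ (fun i ↦ ?_) hp hpk
  rw [homogeneousSubmodule_zero, one_eq_span, span_le, Set.singleton_subset_iff, SetLike.mem_coe,
    LinearMap.mem_ker]
  ext r
  fin_cases i <;> fin_cases r <;>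
    norm_num [evalComb_apply, Fin.sum_univ_succ, weights3, points3, quarterGrad, mono,
      Matrix.cons_val_two, Matrix.tail_cons, Matrix.head_cons]

set_option maxHeartbeats 1000000 in
theorem evalComb_weights4_eq_zero :
    ∀ p ∈ Ideal.span (Set.range quarterGrad), p.IsHomogeneous 4 →
      evalComb weights4 points4 p = 0 := by
  refine fun p hp hpk ↦ map_eq_zero_of_mem_span_of_isHomogeneous (n := 1)
    isHomogeneous_quarterGrad _ (fun i ↦ ?_) hp hpk
  rw [homogeneousSubmodule_one_eq_span_X, span_le, Set.range_subset_iff]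
  intro j
  rw [SetLike.mem_coe, LinearMap.mem_ker]
  ext r
  fin_cases i <;> fin_cases j <;> fin_cases r <;>
    norm_num [evalComb_apply, Fin.sum_univ_succ, weights4, points4, quarterGrad, mono,
      Matrix.cons_val_two, Matrix.tail_cons, Matrix.head_cons]

theorem aeval_nodes_quarterGrad (j i : Fin 3) : aeval (nodes j) (quarterGrad i) = 0 := by
  fin_cases j <;> fin_cases i <;>
    norm_num [nodes, quarterGrad, mono, Matrix.cons_val_two, Matrix.tail_cons, Matrix.head_cons,
      pow_three]

theorem evalComb_nodeWeights_eq_zero {p : P} (hp : p ∈ Ideal.span (Set.range quarterGrad)) :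
    evalComb nodeWeights nodes p = 0 := by
  ext r
  simp [evalComb_apply, aeval_eq_zero_of_mem_span (aeval_nodes_quarterGrad _) hp]

theorem finrank_milnorPiece_zero : finrank ℂ (milnorPiece lemniscate 0) = 1 :=
  finrank_milnorPiece_lemniscate _ basis0 (fun i ↦ by fin_cases i; exact isHomogeneous_mono rfl)
    (map_eq_zero_of_lt_three _ (by norm_num)) evalComb_basis0 homogeneousSubmodule_zero_le

theorem finrank_milnorPiece_one : finrank ℂ (milnorPiece lemniscate 1) = 3 :=
  finrank_milnorPiece_lemniscate _ basis1
    (fun i ↦ by fin_cases i <;> exact isHomogeneous_mono rfl)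
    (map_eq_zero_of_lt_three _ (by norm_num)) evalComb_basis1 homogeneousSubmodule_one_le

theorem finrank_milnorPiece_two : finrank ℂ (milnorPiece lemniscate 2) = 6 :=
  finrank_milnorPiece_lemniscate _ basis2
    (fun i ↦ by fin_cases i <;> exact isHomogeneous_mono rfl)
    (map_eq_zero_of_lt_three _ (by norm_num)) evalComb_basis2 homogeneousSubmodule_two_le

theorem finrank_milnorPiece_three : finrank ℂ (milnorPiece lemniscate 3) = 7 :=
  finrank_milnorPiece_lemniscate _ basis3
    (fun i ↦ by fin_cases i <;> exact isHomogeneous_mono rfl)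
    evalComb_weights3_eq_zero evalComb_basis3 homogeneousSubmodule_three_le

theorem finrank_milnorPiece_four : finrank ℂ (milnorPiece lemniscate 4) = 6 :=
  finrank_milnorPiece_lemniscate _ basis4
    (fun i ↦ by fin_cases i <;> exact isHomogeneous_mono rfl)
    evalComb_weights4_eq_zero evalComb_basis4 homogeneousSubmodule_four_le

theorem finrank_milnorPiece_add_five (n : ℕ) :
    finrank ℂ (milnorPiece lemniscate (n + 5)) = 3 :=
  finrank_milnorPiece_lemniscate _ (nodeBasis n)
    (fun i ↦ by fin_cases i <;> exact isHomogeneous_mono (by omega))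
    (fun _ hp _ ↦ evalComb_nodeWeights_eq_zero hp) (evalComb_nodeBasis n)
    (homogeneousSubmodule_add_five_le n)

end Lemniscate

end

/-- For the Lemniscate of Bernoulli `f = (x²+y²)² - 2(x²-y²)z²`, the graded
pieces of the Milnor algebra have dimensions `1, 3, 6, 7, 6` in degrees `0,…,4`
and dimension `3` in every degree `k ≥ 5`. -/
theorem lemniscate_milnor_dims :
    let f : MvPolynomial (Fin 3) ℂ :=
      (X 0 ^ 2 + X 1 ^ 2) ^ 2 - 2 * (X 0 ^ 2 - X 1 ^ 2) * X 2 ^ 2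
    Module.finrank ℂ (milnorPiece f 0) = 1 ∧
    Module.finrank ℂ (milnorPiece f 1) = 3 ∧
    Module.finrank ℂ (milnorPiece f 2) = 6 ∧
    Module.finrank ℂ (milnorPiece f 3) = 7 ∧
    Module.finrank ℂ (milnorPiece f 4) = 6 ∧
    ∀ k, 5 ≤ k → Module.finrank ℂ (milnorPiece f k) = 3 := by
  refine ⟨Lemniscate.finrank_milnorPiece_zero, Lemniscate.finrank_milnorPiece_one,
    Lemniscate.finrank_milnorPiece_two, Lemniscate.finrank_milnorPiece_three,
    Lemniscate.finrank_milnorPiece_four, fun k hk ↦ ?_⟩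
  obtain ⟨n, rfl⟩ := Nat.exists_eq_add_of_le' hk
  exact Lemniscate.finrank_milnorPiece_add_five n
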